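/- Let H be a nonempty finite type, z : H → ℝ with z i ∈ {0,1} for all i and z i₀ = 1 for some i₀, and c : H × H → ℝ. Let P be the set of all X : H × H → ℝ with X i j ≥ 0 for all i, j; Σ_{i,j} X i j = 1; and for every i, Σ_j X i j + Σ_{j ≠ i} X j i ≤ z i. Then there exists X* ∈ P taking values only in {0,1} such that Σ_{i,j} c i j · X* i j ≤ Σ_{i,j} c i j · X i j for every X ∈ P. -/

import Mathlib

/-!
Because the total flow is normalised to `1`, a feasible `X` is a probability distribution on
pairs, and the node constraints force it to live on pairs `(i, j)` with `z i > 0` and `z j > 0`.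
The cost of `X` is then an average of `c` over pairs of hubs, so it is at least the cost of the
cheapest pair `(a, b)` of hubs, and the indicator of `(a, b)` is itself feasible.
-/

open Finset

theorem le_sum_mul_of_forall_pos {ι : Type*} [Fintype ι] {w c : ι → ℝ} {m : ℝ}
    (hw : ∀ i, 0 ≤ w i) (hw₁ : ∑ i, w i = 1) (hm : ∀ i, 0 < w i → m ≤ c i) :
    m ≤ ∑ i, c i * w i :=
  calc m = ∑ i, m * w i := by rw [← mul_sum, hw₁, mul_one]
    _ ≤ ∑ i, c i * w i := sum_le_sum fun i _ => by
      rcases (hw i).eq_or_lt with h | h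
      · simp [← h]
      · exact mul_le_mul_of_nonneg_right (hm i h) h.le

section

variable {H : Type*} [DecidableEq H]

def singlePairAllocation (a b : H) (p : H × H) : ℝ := if p.1 = a ∧ p.2 = b then 1 else 0

theorem singlePairAllocation_mem_zero_one (a b : H) (p : H × H) :
    singlePairAllocation a b p ∈ ({0, 1} : Set ℝ) := by
  unfold singlePairAllocation
  split_ifs <;> simp

variable [Fintype H]

/-- The feasible set of the allocation problem (3)–(6) for fixed hub variables `z`. -/
def allocationPolytope (z : H → ℝ) : Set (H × H → ℝ) :=
  {X | (∀ i j, 0 ≤ X (i, j)) ∧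
    (∑ i : H, ∑ j : H, X (i, j) = 1) ∧
    (∀ i, (∑ j : H, X (i, j)) + (∑ j ∈ Finset.univ.erase i, X (j, i)) ≤ z i)}

namespace allocationPolytope

variable {z : H → ℝ} {X : H × H → ℝ}

theorem pos_left (hX : X ∈ allocationPolytope z) {i j : H} (hij : 0 < X (i, j)) : 0 < z i := by
  obtain ⟨hnonneg, -, hnode⟩ := hX
  have hrow : X (i, j) ≤ ∑ k, X (i, k) := single_le_sum (fun k _ => hnonneg i k) (mem_univ j)
  have hcol : 0 ≤ ∑ k ∈ univ.erase i, X (k, i) := sum_nonneg fun k _ => hnonneg k i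
  linarith [hnode i]

theorem pos_right (hX : X ∈ allocationPolytope z) {i j : H} (hij : 0 < X (i, j)) : 0 < z j := by
  obtain rfl | hne := eq_or_ne i j
  · exact pos_left hX hij
  obtain ⟨hnonneg, -, hnode⟩ := hX
  have hrow : 0 ≤ ∑ k, X (j, k) := sum_nonneg fun k _ => hnonneg j k
  have hcol : X (i, j) ≤ ∑ k ∈ univ.erase j, X (k, j) :=
    single_le_sum (fun k _ => hnonneg k j) (mem_erase.2 ⟨hne, mem_univ i⟩)
  linarith [hnode j]

end allocationPolytope

theorem sum_mul_singlePairAllocation (c : H × H → ℝ) (a b : H) :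
    ∑ i : H, ∑ j : H, c (i, j) * singlePairAllocation a b (i, j) = c (a, b) := by
  simp [singlePairAllocation, ite_and]

theorem singlePairAllocation_mem_allocationPolytope {z : H → ℝ} (hz : ∀ i, 0 ≤ z i) {a b : H}
    (ha : z a = 1) (hb : z b = 1) : singlePairAllocation a b ∈ allocationPolytope z := by
  refine ⟨fun i j => ?_, by simpa using sum_mul_singlePairAllocation (fun _ => 1) a b, fun i => ?_⟩
  · unfold singlePairAllocation
    positivity
  · simp only [singlePairAllocation, ite_and, sum_ite_eq', mem_erase, mem_univ, and_true]
    split_ifs <;> subst_vars <;> simp_all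

end

theorem stmt_8_general {H : Type*} [Fintype H] [DecidableEq H]
    (z : H → ℝ) (hz : ∀ i, z i ∈ ({0, 1} : Set ℝ))
    (i₀ : H) (hz₀ : z i₀ = 1) (c : H × H → ℝ)
    (P : Set (H × H → ℝ))
    (hP : P = {X | (∀ i j, 0 ≤ X (i, j)) ∧
      (∑ i : H, ∑ j : H, X (i, j) = 1) ∧
      (∀ i, (∑ j : H, X (i, j)) + (∑ j ∈ Finset.univ.erase i, X (j, i)) ≤ z i)}) :
    ∃ Xstar ∈ P, (∀ i j, Xstar (i, j) ∈ ({0, 1} : Set ℝ)) ∧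
      ∀ X ∈ P, ∑ i : H, ∑ j : H, c (i, j) * Xstar (i, j) ≤
        ∑ i : H, ∑ j : H, c (i, j) * X (i, j) := by
  change P = allocationPolytope z at hP
  subst hP
  have hnonneg : ∀ i, 0 ≤ z i := fun i => by rcases hz i with h | h <;> simp_all
  have hhub : ∀ i, 0 < z i → z i = 1 := fun i hi => (hz i).resolve_left hi.ne'
  obtain ⟨⟨a, b⟩, hab, hmin⟩ := (univ.filter fun p : H × H => z p.1 = 1 ∧ z p.2 = 1).exists_min_image
    c ⟨(i₀, i₀), by simp [hz₀]⟩
  obtain ⟨-, ha, hb⟩ := mem_filter.1 hab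
  refine ⟨singlePairAllocation a b, singlePairAllocation_mem_allocationPolytope hnonneg ha hb,
    fun i j => singlePairAllocation_mem_zero_one a b (i, j), fun X hX => ?_⟩
  rw [sum_mul_singlePairAllocation, ← Fintype.sum_prod_type' fun i j => c (i, j) * X (i, j)]
  refine le_sum_mul_of_forall_pos (fun p => hX.1 p.1 p.2) ?_ fun p hp => hmin p ?_
  · rw [Fintype.sum_prod_type' fun i j => X (i, j)]
    exact hX.2.1
  · simp [hhub _ (allocationPolytope.pos_left hX hp), hhub _ (allocationPolytope.pos_right hX hp)]

theorem stmt_8 {H : Type*} [Fintype H] [Nonempty H] [DecidableEq H]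
    (z : H → ℝ) (hz : ∀ i, z i ∈ ({0, 1} : Set ℝ))
    (i₀ : H) (hz₀ : z i₀ = 1) (c : H × H → ℝ)
    (P : Set (H × H → ℝ))
    (hP : P = {X | (∀ i j, 0 ≤ X (i, j)) ∧
      (∑ i : H, ∑ j : H, X (i, j) = 1) ∧
      (∀ i, (∑ j : H, X (i, j)) + (∑ j ∈ Finset.univ.erase i, X (j, i)) ≤ z i)}) :
    ∃ Xstar ∈ P, (∀ i j, Xstar (i, j) ∈ ({0, 1} : Set ℝ)) ∧
      ∀ X ∈ P, ∑ i : H, ∑ j : H, c (i, j) * Xstar (i, j) ≤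
        ∑ i : H, ∑ j : H, c (i, j) * X (i, j) :=
  stmt_8_general z hz i₀ hz₀ c P hP
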